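/- Let λ ∈ [0,1] and let ρ_λ = λ|ψ000⟩⟨ψ000| + (1−λ)|ψ100⟩⟨ψ100| as an 8×8 complex matrix. Consider the set of real numbers Re Tr(B_3 ρ_λ), where B_3 = (A_{10}+A_{11})⊗A_{20}⊗A_{30} + (A_{10}−A_{11})⊗A_{21}⊗I₂ + (A_{10}−A_{11})⊗I₂⊗A_{31}, and the six matrices A_{10}, A_{11}, A_{20}, A_{21}, A_{30}, A_{31} range over all traceless Hermitian 2×2 complex matrices squaring to the identity. Then 2√((2λ−1)² + 4) is the greatest element of this set (it is an upper bound and it is attained). -/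

import Mathlib

open Matrix BigOperators Finset

noncomputable section

/-- Tensor product of `N` 2×2 complex matrices, indexed by bit strings `Fin N → Fin 2`. -/
def tensorN (N : ℕ) (M : Fin N → Matrix (Fin 2) (Fin 2) ℂ) :
    Matrix (Fin N → Fin 2) (Fin N → Fin 2) ℂ :=
  Matrix.of fun f g => ∏ i, M i (f i) (g i)

/-- The three-qubit GHZ basis vector
`|ψ_{ijk}⟩ = (1/√2)(e_{(0,j,k)} + (−1)^i e_{(1,1−j,1−k)})`. -/
def psi (i j k : Fin 2) : (Fin 3 → Fin 2) → ℂ := fun f =>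
  ((Real.sqrt 2 : ℝ) : ℂ)⁻¹ *
    ((if f = ![0, j, k] then 1 else 0)
      + (-1 : ℂ) ^ (i : ℕ) * (if f = ![1, 1 - j, 1 - k] then 1 else 0))

/-- The rank-one projection `|ψ⟩⟨ψ|`. -/
def outer (ψ : (Fin 3 → Fin 2) → ℂ) : Matrix (Fin 3 → Fin 2) (Fin 3 → Fin 2) ℂ :=
  Matrix.of fun f g => ψ f * (starRingEnd ℂ) (ψ g)

/-!
`ρ_λ` lives on the span of `|000⟩` and `|111⟩`, so `Tr(B₃ ρ_λ)` only sees the four entries of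
`B₃` between these two basis vectors. Writing each observable as `!![c, b; b̄, -c]` with
`c² + |b|² = 1`, the Bell value becomes

  `t · Re((b₁₀ + b₁₁) b₂₀ b₃₀) + (c₁₀ - c₁₁)(c₂₁ + c₃₁)`,  `t = 2λ - 1`,

which is at most `|t| ‖b₁₀ + b₁₁‖ + 2 |c₁₀ - c₁₁| ≤ √(t² + 4) · √(‖b₁₀ + b₁₁‖² + (c₁₀ - c₁₁)²)`
by Cauchy–Schwarz, and the last root is at most `2` by the parallelogram law for the unit Bloch
vectors of `A₁₀` and `A₁₁`. Equality holds for `A₁₀, A₁₁ = ±v σ_z + u σ_x` with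
`(u, v) = (t, 2) / √(t² + 4)`, `A₂₀ = A₃₀ = σ_x` and `A₂₁ = A₃₁ = σ_z`.
-/

def IsQubitObservable (A : Matrix (Fin 2) (Fin 2) ℂ) : Prop :=
  A.trace = 0 ∧ A.IsHermitian ∧ A ^ 2 = 1

/-- `c σ_z + (Re b) σ_x - (Im b) σ_y`. -/
def qubitObs (c : ℝ) (b : ℂ) : Matrix (Fin 2) (Fin 2) ℂ :=
  !![(c : ℂ), b; starRingEnd ℂ b, -(c : ℂ)]

theorem isQubitObservable_iff_exists_qubitObs {A : Matrix (Fin 2) (Fin 2) ℂ} :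
    IsQubitObservable A ↔
      ∃ (c : ℝ) (b : ℂ), c ^ 2 + Complex.normSq b = 1 ∧ A = qubitObs c b := by
  constructor
  · rintro ⟨htr, hherm, hsq⟩
    have h00 : starRingEnd ℂ (A 0 0) = A 0 0 := by simpa using congrFun₂ hherm 0 0
    have h10 : starRingEnd ℂ (A 0 1) = A 1 0 := by simpa using congrFun₂ hherm 1 0
    have h11 : A 1 1 = -A 0 0 := by rw [trace_fin_two] at htr; linear_combination htr
    have hsq00 : A 0 0 * A 0 0 + A 0 1 * A 1 0 = 1 := by
      simpa [sq, mul_apply, Fin.sum_univ_two] using congrFun₂ hsq 0 0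
    obtain ⟨c, hc⟩ : ∃ c : ℝ, A 0 0 = c := ⟨(A 0 0).re, (Complex.conj_eq_iff_re.1 h00).symm⟩
    refine ⟨c, A 0 1, ?_, ?_⟩
    · rw [← h10, hc, Complex.mul_conj] at hsq00
      exact_mod_cast (by push_cast; linear_combination hsq00 :
        ((c ^ 2 + Complex.normSq (A 0 1) : ℝ) : ℂ) = 1)
    · conv_lhs => rw [A.eta_fin_two]
      rw [qubitObs, h11, hc, h10]
  · rintro ⟨c, b, hcb, rfl⟩
    have hcb' : (c : ℂ) * c + b * starRingEnd ℂ b = 1 := by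
      rw [Complex.mul_conj]; exact_mod_cast (by linear_combination hcb)
    refine ⟨by simp [qubitObs, trace_fin_two], ?_, ?_⟩
    · ext i j; fin_cases i <;> fin_cases j <;> simp [qubitObs]
    · rw [sq, qubitObs, mul_fin_two, one_fin_two]
      ext i j; fin_cases i <;> fin_cases j <;>
        simp only [mul_neg, neg_mul, neg_neg, of_apply, cons_val', cons_val_zero, cons_val_one,
          cons_val_fin_one, Fin.zero_eta, Fin.mk_one, Fin.isValue] <;>
        first | linear_combination hcb' | ring

theorem norm_le_one_of_sq_add_normSq_eq_one {c : ℝ} {b : ℂ} (h : c ^ 2 + Complex.normSq b = 1) :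
    ‖b‖ ≤ 1 := by
  rw [← sq_le_one_iff₀ (norm_nonneg b), Complex.sq_norm]
  nlinarith [sq_nonneg c]

theorem abs_le_one_of_sq_add_normSq_eq_one {c : ℝ} {b : ℂ} (h : c ^ 2 + Complex.normSq b = 1) :
    |c| ≤ 1 := by
  rw [← sq_le_one_iff_abs_le_one]
  nlinarith [Complex.normSq_nonneg b]

theorem outer_psi (i : Fin 2) :
    outer (psi i 0 0) = (2⁻¹ : ℂ) •
      (single ![0, 0, 0] ![0, 0, 0] 1 + single ![1, 1, 1] ![1, 1, 1] 1 +
        (-1) ^ (i : ℕ) • (single ![0, 0, 0] ![1, 1, 1] 1 + single ![1, 1, 1] ![0, 0, 0] 1)) := by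
  have hne : (![0, 0, 0] : Fin 3 → Fin 2) ≠ ![1, 1, 1] := by decide
  have h2 : ((Real.sqrt 2 : ℝ) : ℂ)⁻¹ * ((Real.sqrt 2 : ℝ) : ℂ)⁻¹ = 2⁻¹ := by
    rw [← mul_inv, ← Complex.ofReal_mul, Real.mul_self_sqrt zero_le_two]; norm_num
  ext f g
  simp only [outer, psi, of_apply, sub_zero, Matrix.add_apply, Matrix.smul_apply, single_apply,
    map_mul, map_add, map_inv₀, Complex.conj_ofReal, apply_ite (starRingEnd ℂ), map_one, map_zero]
  have key : ∀ x : Fin 3 → Fin 2,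
      x = ![0, 0, 0] ∨ x = ![1, 1, 1] ∨ (x ≠ ![0, 0, 0] ∧ x ≠ ![1, 1, 1]) := fun x ↦ by tauto
  rcases key f with rfl | rfl | ⟨hf0, hf1⟩ <;> rcases key g with rfl | rfl | ⟨hg0, hg1⟩ <;>
    fin_cases i <;> simp [Ne.symm, *]

def rho (lam : ℝ) : Matrix (Fin 3 → Fin 2) (Fin 3 → Fin 2) ℂ :=
  (lam : ℂ) • outer (psi 0 0 0) + ((1 - lam : ℝ) : ℂ) • outer (psi 1 0 0)

theorem trace_mul_rho (M : Matrix (Fin 3 → Fin 2) (Fin 3 → Fin 2) ℂ) (lam : ℝ) :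
    (M * rho lam).trace = 2⁻¹ * (M ![0, 0, 0] ![0, 0, 0] + M ![1, 1, 1] ![1, 1, 1])
      + (2 * lam - 1) / 2 * (M ![0, 0, 0] ![1, 1, 1] + M ![1, 1, 1] ![0, 0, 0]) := by
  simp only [rho, outer_psi, mul_add, Matrix.mul_smul, trace_add, trace_smul, trace_mul_single]
  simp only [MulOpposite.op_one, one_smul, Fin.isValue, Fin.coe_ofNat_eq_mod, Nat.zero_mod,
    Nat.mod_succ, pow_zero, pow_one, smul_add, smul_eq_mul, neg_smul, Complex.ofReal_sub,
    Complex.ofReal_one]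
  ring


theorem tensorN_three_apply (X Y Z : Matrix (Fin 2) (Fin 2) ℂ) (i j k i' j' k' : Fin 2) :
    tensorN 3 ![X, Y, Z] ![i, j, k] ![i', j', k'] = X i i' * Y j j' * Z k k' := by
  rw [tensorN, of_apply, Fin.prod_univ_three]; rfl

def bellOperator (A10 A11 A20 A21 A30 A31 : Matrix (Fin 2) (Fin 2) ℂ) :
    Matrix (Fin 3 → Fin 2) (Fin 3 → Fin 2) ℂ :=
  tensorN 3 ![A10 + A11, A20, A30] + tensorN 3 ![A10 - A11, A21, 1]
    + tensorN 3 ![A10 - A11, 1, A31]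

theorem trace_bellOperator_mul_rho (lam c10 c11 c20 c21 c30 c31 : ℝ)
    (b10 b11 b20 b21 b30 b31 : ℂ) :
    (bellOperator (qubitObs c10 b10) (qubitObs c11 b11) (qubitObs c20 b20) (qubitObs c21 b21)
        (qubitObs c30 b30) (qubitObs c31 b31) * rho lam).trace
      = ((2 * lam - 1) * ((b10 + b11) * b20 * b30).re + (c10 - c11) * (c21 + c31) : ℝ) := by
  rw [trace_mul_rho]
  simp only [bellOperator, Matrix.add_apply, Matrix.sub_apply, tensorN_three_apply, qubitObs,
    of_apply, cons_val', cons_val_zero, cons_val_one, empty_val', cons_val_fin_one, one_apply_eq,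
    one_apply_ne zero_ne_one, one_apply_ne one_ne_zero]
  simp only [mul_zero, zero_mul, add_zero, mul_one, ← map_add, ← map_mul, Complex.add_conj]
  push_cast
  ring

theorem normSq_add_add_sq_sub_le_four {c c' : ℝ} {b b' : ℂ} (h : c ^ 2 + Complex.normSq b = 1)
    (h' : c' ^ 2 + Complex.normSq b' = 1) : Complex.normSq (b + b') + (c - c') ^ 2 ≤ 4 := by
  have parallelogram := congrArg₂ (· + ·) (Complex.normSq_add b b') (Complex.normSq_sub b b')
  nlinarith [Complex.normSq_nonneg (b - b'), sq_nonneg (c + c')]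

theorem mul_add_mul_le_sqrt_mul_sqrt (a b x y : ℝ) :
    a * x + b * y ≤ √(a ^ 2 + b ^ 2) * √(x ^ 2 + y ^ 2) := by
  simpa [Fin.sum_univ_two] using Real.sum_mul_le_sqrt_mul_sqrt univ ![a, b] ![x, y]

theorem mul_re_mul_mul_le {t : ℝ} {w z z' : ℂ} (hz : ‖z‖ ≤ 1) (hz' : ‖z'‖ ≤ 1) :
    t * (w * z * z').re ≤ |t| * ‖w‖ :=
  calc t * (w * z * z').re ≤ |t| * |(w * z * z').re| := by
        rw [← abs_mul]; exact le_abs_self _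
    _ ≤ |t| * ‖w‖ := by
        gcongr
        calc |(w * z * z').re| ≤ ‖w * z * z'‖ := Complex.abs_re_le_norm _
          _ = ‖w‖ * ‖z‖ * ‖z'‖ := by rw [norm_mul, norm_mul]
          _ ≤ ‖w‖ * 1 * 1 := by gcongr
          _ = ‖w‖ := by ring

theorem bell_expression_le (t : ℝ) {c10 c11 c21 c31 : ℝ} {b10 b11 b20 b30 : ℂ}
    (h10 : c10 ^ 2 + Complex.normSq b10 = 1) (h11 : c11 ^ 2 + Complex.normSq b11 = 1)
    (hb20 : ‖b20‖ ≤ 1) (hb30 : ‖b30‖ ≤ 1) (hc21 : |c21| ≤ 1) (hc31 : |c31| ≤ 1) :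
    t * ((b10 + b11) * b20 * b30).re + (c10 - c11) * (c21 + c31) ≤ 2 * √(t ^ 2 + 4) := by
  have hc : (c10 - c11) * (c21 + c31) ≤ 2 * |c10 - c11| :=
    calc (c10 - c11) * (c21 + c31) ≤ |c10 - c11| * |c21 + c31| := by
          rw [← abs_mul]; exact le_abs_self _
      _ ≤ |c10 - c11| * 2 := by gcongr; linarith [abs_add_le c21 c31]
      _ = 2 * |c10 - c11| := mul_comm _ _
  have hunit : ‖b10 + b11‖ ^ 2 + |c10 - c11| ^ 2 ≤ 2 ^ 2 := by
    rw [Complex.sq_norm, sq_abs]; linarith [normSq_add_add_sq_sub_le_four h10 h11]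
  calc t * ((b10 + b11) * b20 * b30).re + (c10 - c11) * (c21 + c31)
      ≤ |t| * ‖b10 + b11‖ + 2 * |c10 - c11| := add_le_add (mul_re_mul_mul_le hb20 hb30) hc
    _ ≤ √(|t| ^ 2 + 2 ^ 2) * √(‖b10 + b11‖ ^ 2 + |c10 - c11| ^ 2) :=
        mul_add_mul_le_sqrt_mul_sqrt _ _ _ _
    _ = √(t ^ 2 + 4) * √(‖b10 + b11‖ ^ 2 + |c10 - c11| ^ 2) := by
        rw [sq_abs t, show (2 : ℝ) ^ 2 = 4 by norm_num]
    _ ≤ √(t ^ 2 + 4) * 2 := by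
        gcongr
        exact Real.sqrt_le_iff.2 ⟨zero_le_two, hunit⟩
    _ = 2 * √(t ^ 2 + 4) := mul_comm _ _

theorem exists_sq_add_sq_eq_one_mul_add_two_mul_eq_sqrt (t : ℝ) :
    ∃ u v : ℝ, u ^ 2 + v ^ 2 = 1 ∧ t * u + 2 * v = √(t ^ 2 + 4) := by
  have hs : 0 < √(t ^ 2 + 4) := Real.sqrt_pos.2 (by positivity)
  have hs2 : √(t ^ 2 + 4) ^ 2 = t ^ 2 + 4 := Real.sq_sqrt (by positivity)
  refine ⟨t / √(t ^ 2 + 4), 2 / √(t ^ 2 + 4), ?_, ?_⟩ <;> field_simp <;> linear_combination -hs2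

theorem re_trace_bellOperator_mul_rho_le {A10 A11 A20 A21 A30 A31 : Matrix (Fin 2) (Fin 2) ℂ}
    (h10 : IsQubitObservable A10) (h11 : IsQubitObservable A11) (h20 : IsQubitObservable A20)
    (h21 : IsQubitObservable A21) (h30 : IsQubitObservable A30) (h31 : IsQubitObservable A31)
    (lam : ℝ) :
    ((bellOperator A10 A11 A20 A21 A30 A31 * rho lam).trace).re ≤
      2 * √((2 * lam - 1) ^ 2 + 4) := by
  obtain ⟨c10, b10, hu10, rfl⟩ := isQubitObservable_iff_exists_qubitObs.1 h10
  obtain ⟨c11, b11, hu11, rfl⟩ := isQubitObservable_iff_exists_qubitObs.1 h11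
  obtain ⟨c20, b20, hu20, rfl⟩ := isQubitObservable_iff_exists_qubitObs.1 h20
  obtain ⟨c21, b21, hu21, rfl⟩ := isQubitObservable_iff_exists_qubitObs.1 h21
  obtain ⟨c30, b30, hu30, rfl⟩ := isQubitObservable_iff_exists_qubitObs.1 h30
  obtain ⟨c31, b31, hu31, rfl⟩ := isQubitObservable_iff_exists_qubitObs.1 h31
  rw [trace_bellOperator_mul_rho, Complex.ofReal_re]
  exact bell_expression_le _ hu10 hu11
    (norm_le_one_of_sq_add_normSq_eq_one hu20) (norm_le_one_of_sq_add_normSq_eq_one hu30)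
    (abs_le_one_of_sq_add_normSq_eq_one hu21) (abs_le_one_of_sq_add_normSq_eq_one hu31)

theorem exists_re_trace_bellOperator_mul_rho_eq (lam : ℝ) :
    ∃ A10 A11 A20 A21 A30 A31 : Matrix (Fin 2) (Fin 2) ℂ,
      IsQubitObservable A10 ∧ IsQubitObservable A11 ∧ IsQubitObservable A20 ∧
      IsQubitObservable A21 ∧ IsQubitObservable A30 ∧ IsQubitObservable A31 ∧
      ((bellOperator A10 A11 A20 A21 A30 A31 * rho lam).trace).re =
        2 * √((2 * lam - 1) ^ 2 + 4) := by
  obtain ⟨u, v, huv, hval⟩ := exists_sq_add_sq_eq_one_mul_add_two_mul_eq_sqrt (2 * lam - 1)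
  have hσx : IsQubitObservable (qubitObs 0 1) :=
    isQubitObservable_iff_exists_qubitObs.2 ⟨0, 1, by simp, rfl⟩
  have hσz : IsQubitObservable (qubitObs 1 0) :=
    isQubitObservable_iff_exists_qubitObs.2 ⟨1, 0, by simp, rfl⟩
  refine ⟨qubitObs v u, qubitObs (-v) u, qubitObs 0 1, qubitObs 1 0, qubitObs 0 1, qubitObs 1 0,
    isQubitObservable_iff_exists_qubitObs.2 ⟨v, u, by rw [Complex.normSq_ofReal]; linarith, rfl⟩,
    isQubitObservable_iff_exists_qubitObs.2
      ⟨-v, u, by rw [neg_sq, Complex.normSq_ofReal]; linarith, rfl⟩,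
    hσx, hσz, hσx, hσz, ?_⟩
  rw [trace_bellOperator_mul_rho, Complex.ofReal_re, ← hval]
  simp only [mul_one, Complex.add_re, Complex.ofReal_re, sub_neg_eq_add]
  ring

theorem bell_value_rho_lambda_general (lam : ℝ) :
    IsGreatest
      { x : ℝ | ∃ A10 A11 A20 A21 A30 A31 : Matrix (Fin 2) (Fin 2) ℂ,
          (A10.trace = 0 ∧ A10.IsHermitian ∧ A10 ^ 2 = 1) ∧
          (A11.trace = 0 ∧ A11.IsHermitian ∧ A11 ^ 2 = 1) ∧
          (A20.trace = 0 ∧ A20.IsHermitian ∧ A20 ^ 2 = 1) ∧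
          (A21.trace = 0 ∧ A21.IsHermitian ∧ A21 ^ 2 = 1) ∧
          (A30.trace = 0 ∧ A30.IsHermitian ∧ A30 ^ 2 = 1) ∧
          (A31.trace = 0 ∧ A31.IsHermitian ∧ A31 ^ 2 = 1) ∧
          x = (((tensorN 3 ![A10 + A11, A20, A30]
                  + tensorN 3 ![A10 - A11, A21, 1]
                  + tensorN 3 ![A10 - A11, 1, A31])
                * ((lam : ℂ) • outer (psi 0 0 0)
                    + ((1 - lam : ℝ) : ℂ) • outer (psi 1 0 0))).trace).re }
      (2 * Real.sqrt ((2 * lam - 1) ^ 2 + 4)) := by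
  refine ⟨?_, ?_⟩
  · obtain ⟨A10, A11, A20, A21, A30, A31, h10, h11, h20, h21, h30, h31, hval⟩ :=
      exists_re_trace_bellOperator_mul_rho_eq lam
    exact ⟨A10, A11, A20, A21, A30, A31, h10, h11, h20, h21, h30, h31, hval.symm⟩
  · rintro x ⟨A10, A11, A20, A21, A30, A31, h10, h11, h20, h21, h30, h31, rfl⟩
    exact re_trace_bellOperator_mul_rho_le h10 h11 h20 h21 h30 h31 lam

/-- The maximal Bell value of the three-party Bell operator at `α = 1` on the state
`ρ_λ = λ|ψ₀₀₀⟩⟨ψ₀₀₀| + (1−λ)|ψ₁₀₀⟩⟨ψ₁₀₀|`, over all traceless `±1`-valued qubit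
observables, is `2√((2λ−1)² + 4)`. -/
theorem bell_value_rho_lambda (lam : ℝ) (h0 : 0 ≤ lam) (h1 : lam ≤ 1) :
    IsGreatest
      { x : ℝ | ∃ A10 A11 A20 A21 A30 A31 : Matrix (Fin 2) (Fin 2) ℂ,
          (A10.trace = 0 ∧ A10.IsHermitian ∧ A10 ^ 2 = 1) ∧
          (A11.trace = 0 ∧ A11.IsHermitian ∧ A11 ^ 2 = 1) ∧
          (A20.trace = 0 ∧ A20.IsHermitian ∧ A20 ^ 2 = 1) ∧
          (A21.trace = 0 ∧ A21.IsHermitian ∧ A21 ^ 2 = 1) ∧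
          (A30.trace = 0 ∧ A30.IsHermitian ∧ A30 ^ 2 = 1) ∧
          (A31.trace = 0 ∧ A31.IsHermitian ∧ A31 ^ 2 = 1) ∧
          x = (((tensorN 3 ![A10 + A11, A20, A30]
                  + tensorN 3 ![A10 - A11, A21, 1]
                  + tensorN 3 ![A10 - A11, 1, A31])
                * ((lam : ℂ) • outer (psi 0 0 0)
                    + ((1 - lam : ℝ) : ℂ) • outer (psi 1 0 0))).trace).re }
      (2 * Real.sqrt ((2 * lam - 1) ^ 2 + 4)) :=
  bell_value_rho_lambda_general lam
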